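/- arXiv:math/0402347 — 7 statements merged into one kernel-verified Lean document; each statement's English description precedes it below -/
import Mathlib

section
/- Let V be a finite-dimensional real vector space, R ⊆ V a subspace, and θ a skew-symmetric bilinear form on R. Then L := {(X, α) : X ∈ R, α ∈ V*, α|_R = i_X θ} (where i_X θ denotes the linear functional Y ↦ θ(X,Y) on R) is a vector Dirac structure on V with pr₁(L) = R, whose induced bilinear form on R equals θ. -/
/-!
Every `i_X θ` extends from `R` to a functional on `V`, so `pr₁(L) = R`; the fibre of `pr₁` over `0`
is the annihilator `R⁰`, hence `dim L = dim R + dim R⁰ = dim V`. Isotropy of `L` is exactly the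
skew-symmetry of `θ`.
-/

open Module

section

variable {K V : Type*} [Field K] [AddCommGroup V] [Module K V]

def diracOfForm (R : Submodule K V) (θ : R →ₗ[K] R →ₗ[K] K) : Submodule K (V × Dual K V) where
  carrier := {p | ∃ h : p.1 ∈ R, ∀ y : R, p.2 y = θ ⟨p.1, h⟩ y}
  zero_mem' := ⟨R.zero_mem, fun y => by simp [(R.mk_eq_zero _).2 rfl]⟩
  add_mem' := by
    rintro p q ⟨hp, hp'⟩ ⟨hq, hq'⟩
    exact ⟨R.add_mem hp hq, fun y => by
      simpa [hp', hq'] using (congrArg (· y) (map_add θ ⟨p.1, hp⟩ ⟨q.1, hq⟩)).symm⟩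
  smul_mem' := by
    rintro c p ⟨hp, hp'⟩
    exact ⟨R.smul_mem c hp, fun y => by
      simpa [hp'] using (congrArg (· y) (map_smul θ c ⟨p.1, hp⟩)).symm⟩

variable (R : Submodule K V) (θ : R →ₗ[K] R →ₗ[K] K)

theorem mem_diracOfForm {p : V × Dual K V} :
    p ∈ diracOfForm R θ ↔ ∃ h : p.1 ∈ R, ∀ y : R, p.2 y = θ ⟨p.1, h⟩ y := Iff.rfl

theorem zero_prod_mem_diracOfForm_iff {α : Dual K V} :
    ((0, α) : V × Dual K V) ∈ diracOfForm R θ ↔ α ∈ R.dualAnnihilator := by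
  simp [mem_diracOfForm, Submodule.mem_dualAnnihilator, (R.mk_eq_zero R.zero_mem).2 rfl]

theorem diracOfForm_isotropic (hθ : ∀ x y : R, θ x y = - θ y x) :
    ∀ z ∈ diracOfForm R θ, ∀ w ∈ diracOfForm R θ, z.2 w.1 + w.2 z.1 = 0 := by
  rintro z ⟨hz, hz'⟩ w ⟨hw, hw'⟩
  rw [hz' ⟨w.1, hw⟩, hw' ⟨z.1, hz⟩, hθ, neg_add_cancel]

theorem map_fst_diracOfForm : (diracOfForm R θ).map (LinearMap.fst K V (Dual K V)) = R := by
  refine le_antisymm ?_ fun x hx => ?_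
  · rintro _ ⟨p, ⟨hp, -⟩, rfl⟩
    exact hp
  · obtain ⟨α, hα⟩ := LinearMap.exists_extend (θ ⟨x, hx⟩)
    exact ⟨(x, α), ⟨hx, fun y => LinearMap.congr_fun hα y⟩, rfl⟩

noncomputable def kerFstDiracOfFormEquiv :
    LinearMap.ker ((LinearMap.fst K V (Dual K V)).domRestrict (diracOfForm R θ)) ≃ₗ[K]
      R.dualAnnihilator where
  toFun p := ⟨(p : diracOfForm R θ).1.2, by
    obtain ⟨⟨⟨x, α⟩, hp⟩, hx : x = 0⟩ := p
    subst hx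
    exact (zero_prod_mem_diracOfForm_iff R θ).1 hp⟩
  map_add' _ _ := rfl
  map_smul' _ _ := rfl
  invFun α := ⟨⟨(0, α), (zero_prod_mem_diracOfForm_iff R θ).2 α.2⟩, rfl⟩
  left_inv := by
    rintro ⟨⟨⟨x, α⟩, hp⟩, hx : x = 0⟩
    subst hx
    rfl
  right_inv _ := rfl

theorem finrank_diracOfForm [FiniteDimensional K V] :
    finrank K (diracOfForm R θ) = finrank K V := by
  have := LinearMap.finrank_range_add_finrank_ker (V := diracOfForm R θ)
    ((LinearMap.fst K V (Dual K V)).domRestrict (diracOfForm R θ))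
  rw [LinearMap.range_domRestrict, map_fst_diracOfForm, (kerFstDiracOfFormEquiv R θ).finrank_eq,
    Subspace.finrank_add_finrank_dualAnnihilator_eq] at this
  exact this.symm

end

/-- Given a subspace `R ⊆ V` and a skew-symmetric bilinear form `θ` on `R`, the set
`L = {(X,α) : X ∈ R, α|_R = i_X θ}` is a vector Dirac structure on `V` with `pr₁(L) = R`
and induced form `θ`. -/
theorem stmt_6 (V : Type*) [AddCommGroup V] [Module ℝ V] [FiniteDimensional ℝ V]
    (R : Submodule ℝ V) (θ : R →ₗ[ℝ] R →ₗ[ℝ] ℝ)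
    (hθ : ∀ x y : R, θ x y = - θ y x) :
    ∃ L : Submodule ℝ (V × Module.Dual ℝ V),
      (L : Set (V × Module.Dual ℝ V)) =
        {p | ∃ h : p.1 ∈ R, ∀ y : R, p.2 y.1 = θ ⟨p.1, h⟩ y} ∧
      (∀ z ∈ L, ∀ w ∈ L, z.2 w.1 + w.2 z.1 = 0) ∧
      Module.finrank ℝ L = Module.finrank ℝ V ∧
      Submodule.map (LinearMap.fst ℝ V (Module.Dual ℝ V)) L = R ∧
      (∀ (X : V) (α : Module.Dual ℝ V), (X, α) ∈ L →
        ∀ (hX : X ∈ R) (y : R), α y.1 = θ ⟨X, hX⟩ y) := by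
  refine ⟨diracOfForm R θ, rfl, diracOfForm_isotropic R θ hθ, finrank_diracOfForm R θ,
    map_fst_diracOfForm R θ, ?_⟩
  rintro X α ⟨_, hα⟩ _ y
  exact hα y
end

section
/- Let L be a vector Dirac structure on a finite-dimensional real vector space V and W ⊆ V a subspace with inclusion ι : W → V. Define the restricted Dirac structure L_W on W by the pair (R_W, θ_W) where R_W = pr₁(L) ∩ W and θ_W = ι*θ (θ being the form induced by L on pr₁(L)). Then there is a canonical linear isomorphism L_W ≅ (L ∩ (W ⊕ V*)) / (L ∩ ({0} ⊕ W°)), where W° ⊆ V* is the annihilator of W. -/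
/-!
Write `R = pr₁ L`. Isotropy of `L` gives `L ∩ ({0} ⊕ V*) ⊆ {0} ⊕ R°`, and rank–nullity for
`pr₁ : L → R` together with `dim L = dim V` upgrades this to an equality.
The map `(X, α) ↦ (X, α|_W)` on `L ∩ (W ⊕ V*)` has kernel `L ∩ ({0} ⊕ W°)` and lands in `L_W`,
because `θ (X, ·) = α` on `R`. Conversely, for `(X, β) ∈ L_W` pick `(X, α) ∈ L`; then `β - α|_W`
vanishes on `R ∩ W`, so, as `(R ∩ W)° = R° + W°`, it is the restriction of some `γ ∈ R°`, and
`(X, α + γ) ∈ L` is a preimage.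
-/

section

open Module Submodule LinearMap

variable {K V : Type*} [Field K] [AddCommGroup V] [Module K V]

theorem Subspace.exists_mem_dualAnnihilator_dualMap_subtype_eq [FiniteDimensional K V]
    {R W : Subspace K V} {δ : Dual K W} (hδ : ∀ w : W, (w : V) ∈ R → δ w = 0) :
    ∃ γ ∈ R.dualAnnihilator, W.subtype.dualMap γ = δ := by
  have hlift : W.dualLift δ ∈ (R ⊓ W).dualAnnihilator := by
    rw [mem_dualAnnihilator]
    rintro v ⟨hvR, hvW⟩
    rw [Subspace.dualLift_of_mem hvW]
    exact hδ ⟨v, hvW⟩ hvR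
  rw [Subspace.dualAnnihilator_inf_eq] at hlift
  obtain ⟨γ, hγ, η, hη, hsum⟩ := mem_sup.mp hlift
  refine ⟨γ, hγ, LinearMap.ext fun w => ?_⟩
  have := congrArg (· (w : V)) hsum
  simpa [Subspace.dualLift_of_subtype, (mem_dualAnnihilator η).mp hη w w.2] using this

namespace Submodule

theorem finrank_map_fst_add_finrank_comap_inr {M N : Type*} [AddCommGroup M]
    [Module K M] [AddCommGroup N] [Module K N] [FiniteDimensional K M] [FiniteDimensional K N]
    (L : Submodule K (M × N)) :
    finrank K (L.map (LinearMap.fst K M N)) + finrank K (L.comap (inr K M N)) = finrank K L := by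
  let f := (LinearMap.fst K M N).domRestrict L
  let ψ : L.comap (inr K M N) →ₗ[K] L := (inr K M N).restrict fun _ h => h
  have hψ : Function.Injective ψ := fun a b h =>
    Subtype.ext (congrArg (fun z : L => (z : M × N).2) h)
  have hker : range ψ = ker f := by
    ext ⟨⟨x, y⟩, h⟩
    simp only [range_restrict, map_inr, mem_comap, subtype_apply, mem_prod, mem_bot, coe_inr,
      mem_ker, domRestrict_apply, fst_apply, and_iff_left_iff_imp, ψ, f]
    rintro rfl
    exact h
  rw [← range_domRestrict, ← finrank_range_of_inj hψ, hker]
  exact f.finrank_range_add_finrank_ker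

variable {L : Submodule K (V × Dual K V)}

theorem comap_inr_le_dualAnnihilator_map_fst (hiso : ∀ z ∈ L, ∀ w ∈ L, z.2 w.1 + w.2 z.1 = 0) :
    L.comap (inr K V (Dual K V)) ≤ (L.map (LinearMap.fst K V (Dual K V))).dualAnnihilator := by
  intro γ hγ
  rw [mem_dualAnnihilator]
  rintro _ ⟨w, hw, rfl⟩
  simpa using hiso _ hγ w hw

theorem comap_inr_eq_dualAnnihilator_map_fst [FiniteDimensional K V]
    (hiso : ∀ z ∈ L, ∀ w ∈ L, z.2 w.1 + w.2 z.1 = 0) (hdim : finrank K L = finrank K V) :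
    L.comap (inr K V (Dual K V)) = (L.map (LinearMap.fst K V (Dual K V))).dualAnnihilator := by
  refine eq_of_le_of_finrank_le (comap_inr_le_dualAnnihilator_map_fst hiso) ?_
  have := Subspace.finrank_add_finrank_dualAnnihilator_eq (L.map (LinearMap.fst K V (Dual K V)))
  have := L.finrank_map_fst_add_finrank_comap_inr
  omega

variable (L) (W : Submodule K V)

/-- `(X, α) ↦ (X, ι*α)`; its range is the restricted Dirac structure `L_W`. -/
def backwardImageMap : ↥(L ⊓ W.prod ⊤) →ₗ[K] W × Dual K W :=
  (codRestrict W (LinearMap.fst K V (Dual K V) ∘ₗ (L ⊓ W.prod ⊤).subtype)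
      fun z => (mem_prod.mp (mem_inf.mp z.2).2).1).prod
    (W.subtype.dualMap ∘ₗ LinearMap.snd K V (Dual K V) ∘ₗ (L ⊓ W.prod ⊤).subtype)

@[simp]
theorem backwardImageMap_apply_fst (z : ↥(L ⊓ W.prod ⊤)) :
    ((L.backwardImageMap W z).1 : V) = (z : V × Dual K V).1 :=
  rfl

@[simp]
theorem backwardImageMap_apply_snd (z : ↥(L ⊓ W.prod ⊤)) (w : W) :
    (L.backwardImageMap W z).2 w = (z : V × Dual K V).2 w :=
  rfl

theorem ker_backwardImageMap :
    ker (L.backwardImageMap W) =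
      comap (L ⊓ W.prod ⊤).subtype (L ⊓ (⊥ : Submodule K V).prod W.dualAnnihilator) := by
  ext ⟨⟨X, α⟩, hz⟩
  simp [Prod.ext_iff, ← Subtype.coe_inj, LinearMap.ext_iff, mem_dualAnnihilator, (mem_inf.mp hz).1]

variable {L} in
theorem mem_range_backwardImageMap_iff [FiniteDimensional K V]
    (hiso : ∀ z ∈ L, ∀ w ∈ L, z.2 w.1 + w.2 z.1 = 0) (hdim : finrank K L = finrank K V)
    (p : W × Dual K W) :
    p ∈ range (L.backwardImageMap W) ↔ ∃ α : Dual K V, ((p.1 : V), α) ∈ L ∧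
      ∀ w : W, (w : V) ∈ L.map (LinearMap.fst K V (Dual K V)) → p.2 w = α w := by
  constructor
  · rintro ⟨⟨⟨X, α⟩, hz⟩, rfl⟩
    exact ⟨α, (mem_inf.mp hz).1, fun _ _ => rfl⟩
  · rintro ⟨α, hα, hagree⟩
    obtain ⟨γ, hγ, hγW⟩ := Subspace.exists_mem_dualAnnihilator_dualMap_subtype_eq
      (R := L.map (LinearMap.fst K V (Dual K V))) (δ := p.2 - W.subtype.dualMap α)
      fun w hw => by simp [hagree w hw]
    rw [← comap_inr_eq_dualAnnihilator_map_fst hiso hdim] at hγ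
    have hz : ((p.1 : V), α + γ) ∈ L ⊓ W.prod ⊤ :=
      mem_inf.mpr ⟨by simpa using add_mem hα hγ, mem_prod.mpr ⟨p.1.2, trivial⟩⟩
    refine ⟨⟨_, hz⟩, Prod.ext rfl (LinearMap.ext fun w => ?_)⟩
    have hγw : γ w = p.2 w - α w := congrArg (· w) hγW
    simp [hγw]

end Submodule

end

/-- Restriction of a vector Dirac structure `L` on `V` to a subspace `W`: the Dirac
structure `L_W` on `W` defined by the pair `(pr₁(L) ∩ W, ι*θ)` is canonically isomorphic to
`(L ∩ (W ⊕ V*)) / (L ∩ ({0} ⊕ W°))`.  The isomorphism is expressed by exhibiting the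
canonical surjective linear map `L ∩ (W ⊕ V*) → L_W`, `(X, α) ↦ (X, α|_W)`, whose kernel
is `L ∩ ({0} ⊕ W°)`. -/
theorem stmt_7 (V : Type*) [AddCommGroup V] [Module ℝ V] [FiniteDimensional ℝ V]
    (L : Submodule ℝ (V × Module.Dual ℝ V))
    (hiso : ∀ z ∈ L, ∀ w ∈ L, z.2 w.1 + w.2 z.1 = 0)
    (hdim : Module.finrank ℝ L = Module.finrank ℝ V)
    (W : Submodule ℝ V)
    (θ : Submodule.map (LinearMap.fst ℝ V (Module.Dual ℝ V)) L →ₗ[ℝ]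
         Submodule.map (LinearMap.fst ℝ V (Module.Dual ℝ V)) L →ₗ[ℝ] ℝ)
    (hθ : ∀ (X Y : V) (α β : Module.Dual ℝ V) (hX : (X, α) ∈ L) (hY : (Y, β) ∈ L),
        θ ⟨X, Submodule.mem_map.mpr ⟨(X, α), hX, rfl⟩⟩
          ⟨Y, Submodule.mem_map.mpr ⟨(Y, β), hY, rfl⟩⟩ = α Y) :
    ∃ LW : Submodule ℝ (↥W × Module.Dual ℝ ↥W),
      (LW : Set (↥W × Module.Dual ℝ ↥W)) =
        {p | ∃ h : (p.1 : V) ∈ Submodule.map (LinearMap.fst ℝ V (Module.Dual ℝ V)) L,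
          ∀ (y : V) (hyR : y ∈ Submodule.map (LinearMap.fst ℝ V (Module.Dual ℝ V)) L)
            (hyW : y ∈ W), p.2 ⟨y, hyW⟩ = θ ⟨(p.1 : V), h⟩ ⟨y, hyR⟩} ∧
      ∃ φ : ↥(L ⊓ W.prod (⊤ : Submodule ℝ (Module.Dual ℝ V))) →ₗ[ℝ] ↥LW,
        Function.Surjective φ ∧
        LinearMap.ker φ =
          Submodule.comap (L ⊓ W.prod (⊤ : Submodule ℝ (Module.Dual ℝ V))).subtype
            (L ⊓ (⊥ : Submodule ℝ V).prod W.dualAnnihilator) ∧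
        ∀ p : ↥(L ⊓ W.prod (⊤ : Submodule ℝ (Module.Dual ℝ V))),
          (((φ p : ↥W × Module.Dual ℝ ↥W).1 : V) = (p : V × Module.Dual ℝ V).1) ∧
          ∀ w : ↥W, (φ p : ↥W × Module.Dual ℝ ↥W).2 w = (p : V × Module.Dual ℝ V).2 w.1 := by

  have hθ_apply : ∀ (X Y : V) (α : Module.Dual ℝ V), (X, α) ∈ L → ∀ hXR hYR,
      θ ⟨X, hXR⟩ ⟨Y, hYR⟩ = α Y := by
    rintro X _ α hX - ⟨⟨_, β⟩, hY, rfl⟩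
    exact hθ X _ α β hX hY
  refine ⟨LinearMap.range (L.backwardImageMap W), ?_, (L.backwardImageMap W).rangeRestrict,
    LinearMap.surjective_rangeRestrict _,
    by rw [LinearMap.ker_rangeRestrict, Submodule.ker_backwardImageMap],
    fun _ => ⟨rfl, fun _ => rfl⟩⟩
  ext p
  rw [SetLike.mem_coe, Submodule.mem_range_backwardImageMap_iff W hiso hdim]
  constructor
  · rintro ⟨α, hα, hagree⟩
    exact ⟨Submodule.mem_map_of_mem hα, fun y hyR hyW =>
      (hagree ⟨y, hyW⟩ hyR).trans (hθ_apply _ _ α hα _ hyR).symm⟩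
  · rintro ⟨hR, hp⟩
    obtain ⟨⟨_, α⟩, hz, hX⟩ := id hR
    have hα : ((p.1 : V), α) ∈ L := hX ▸ hz
    exact ⟨α, hα, fun w hw => (hp w hw w.2).trans (hθ_apply _ _ α hα hR hw)⟩
end

section
/- Let f : V₁ → V₂ be a linear map between finite-dimensional real vector spaces. For a vector Dirac structure L on V₂, the backward image f*L := {(X, f*(β)) : X ∈ V₁, β ∈ V₂*, (f(X), β) ∈ L} is a vector Dirac structure on V₁; and for a vector Dirac structure L on V₁, the forward image f_*L := {(f(X), β) : X ∈ V₁, β ∈ V₂*, (X, f*(β)) ∈ L} is a vector Dirac structure on V₂. -/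
/-!
Both images have the form `h (g⁻¹ L)` for `g = f × id : V₁ × V₂* → V₂ × V₂*` and
`h = id × f* : V₁ × V₂* → V₁ × V₁*` (with the roles of `g` and `h` exchanged for the forward
image). These two maps pull the pairings back to the same form on `V₁ × V₂*`, so isotropy passes
to the image. For the dimension, a Dirac structure satisfies `L^⊥ = L`, hence
`(W + L)^⊥ = W^⊥ ∩ L` for every `W`; taking `W = range g`, whose orthogonal is `g (ker h)`, and
using `ker g ∩ ker h = 0`, rank–nullity gives `dim h (g⁻¹ L) = dim (V₁ × V₂*) - dim L`.
-/

open Module LinearMap Submodule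

section FinrankMap

variable {K A N : Type*} [DivisionRing K] [AddCommGroup A] [Module K A] [FiniteDimensional K A]
  [AddCommGroup N] [Module K N]

lemma Submodule.finrank_map_add_finrank_inf_ker (h : A →ₗ[K] N) (E : Submodule K A) :
    finrank K (E.map h) + finrank K ↥(ker h ⊓ E) = finrank K E := by
  have key := finrank_range_add_finrank_ker (h.domRestrict E)
  rwa [range_domRestrict, ker_domRestrict, ← finrank_map_subtype_eq, map_comap_subtype,
    inf_comm] at key

end FinrankMap

namespace LinearMap.BilinForm

variable {K M : Type*} [Field K] [AddCommGroup M] [Module K M]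

lemma orthogonal_sup (B : LinearMap.BilinForm K M) (W L : Submodule K M) :
    B.orthogonal (W ⊔ L) = B.orthogonal W ⊓ B.orthogonal L := by
  ext m
  simp only [mem_orthogonal_iff, mem_inf]
  refine ⟨fun hm => ⟨fun n hn => hm n (mem_sup_left hn), fun n hn => hm n (mem_sup_right hn)⟩, ?_⟩
  rintro ⟨hW, hL⟩ n hn
  obtain ⟨w, hw, l, hl, rfl⟩ := mem_sup.mp hn
  rw [map_add, LinearMap.add_apply, hW w hw, hL l hl, add_zero]

variable [FiniteDimensional K M] {B : LinearMap.BilinForm K M}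

lemma orthogonal_eq_self_of_isotropic (hB : B.Nondegenerate) {L : Submodule K M}
    (hiso : ∀ x ∈ L, ∀ y ∈ L, B x y = 0) (hdim : finrank K M = 2 * finrank K L) :
    B.orthogonal L = L := by
  have hle : L ≤ B.orthogonal L := fun x hx n hn => hiso n hn x hx
  refine (eq_of_le_of_finrank_le hle ?_).symm
  rw [finrank_orthogonal hB]
  omega

lemma finrank_inf_add_finrank_of_orthogonal_eq_self (hB : B.Nondegenerate) {L : Submodule K M}
    (hL : B.orthogonal L = L) (W : Submodule K M) :
    finrank K ↥(W ⊓ L) + finrank K L = finrank K W + finrank K ↥(B.orthogonal W ⊓ L) := by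
  have hsup := finrank_orthogonal hB (W ⊔ L)
  rw [orthogonal_sup, hL] at hsup
  have hL' := finrank_orthogonal hB L
  rw [hL] at hL'
  have := finrank_sup_add_finrank_inf_eq W L
  have := Submodule.finrank_le (W ⊔ L)
  have := Submodule.finrank_le L
  omega

variable {A N : Type*} [AddCommGroup A] [Module K A] [FiniteDimensional K A]
  [AddCommGroup N] [Module K N]

lemma finrank_map_comap_add_finrank (hB : B.Nondegenerate) (g : A →ₗ[K] M) (h : A →ₗ[K] N)
    (horth : B.orthogonal (range g) = (ker h).map g) (hker : Disjoint (ker g) (ker h))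
    {L : Submodule K M} (hL : B.orthogonal L = L) :
    finrank K ((L.comap g).map h) + finrank K L = finrank K A := by
  set E := L.comap g
  have hE_h := finrank_map_add_finrank_inf_ker h E
  have hE_g := finrank_map_add_finrank_inf_ker g E
  rw [map_comap_eq, inf_eq_left.mpr (ker_le_comap g)] at hE_g
  have hinj := finrank_map_add_finrank_inf_ker g (ker h ⊓ E)
  rw [← inf_assoc, hker.eq_bot, bot_inf_eq, finrank_bot, add_zero] at hinj
  rw [← map_inf_eq_map_inf_comap, ← horth] at hinj
  have hcore := finrank_inf_add_finrank_of_orthogonal_eq_self hB hL (range g)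
  have := finrank_range_add_finrank_ker g
  omega

end LinearMap.BilinForm

lemma LinearMap.BilinForm.isotropic_map_comap {R A M N : Type*} [CommSemiring R]
    [AddCommMonoid A] [Module R A] [AddCommMonoid M] [Module R M] [AddCommMonoid N] [Module R N]
    {BM : LinearMap.BilinForm R M} {BN : LinearMap.BilinForm R N} (g : A →ₗ[R] M)
    (h : A →ₗ[R] N) (hgh : ∀ u v, BN (h u) (h v) = BM (g u) (g v)) {L : Submodule R M}
    (hL : ∀ x ∈ L, ∀ y ∈ L, BM x y = 0) :
    ∀ x ∈ (L.comap g).map h, ∀ y ∈ (L.comap g).map h, BN x y = 0 := by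
  rintro _ ⟨u, hu, rfl⟩ _ ⟨v, hv, rfl⟩
  rw [hgh]
  exact hL _ hu _ hv

section DualSum

variable (K : Type*) [Field K]

def plusPairing (V : Type*) [AddCommGroup V] [Module K V] :
    LinearMap.BilinForm K (V × Dual K V) :=
  LinearMap.mk₂ K (fun z w => z.2 w.1 + w.2 z.1)
    (fun _ _ _ => by simp only [Prod.fst_add, Prod.snd_add, map_add, LinearMap.add_apply]; ring)
    (fun _ _ _ => by
      simp only [Prod.smul_fst, Prod.smul_snd, map_smul, LinearMap.smul_apply, smul_eq_mul]; ring)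
    (fun _ _ _ => by simp only [Prod.fst_add, Prod.snd_add, map_add, LinearMap.add_apply]; ring)
    (fun _ _ _ => by
      simp only [Prod.smul_fst, Prod.smul_snd, map_smul, LinearMap.smul_apply, smul_eq_mul]; ring)

variable {K} {V₁ V₂ : Type*} [AddCommGroup V₁] [Module K V₁] [AddCommGroup V₂] [Module K V₂]

@[simp]
lemma plusPairing_apply (z w : V₁ × Dual K V₁) : plusPairing K V₁ z w = z.2 w.1 + w.2 z.1 := rfl

lemma plusPairing_nondegenerate : (plusPairing K V₁).Nondegenerate := by
  refine (LinearMap.IsRefl.nondegenerate_iff_separatingLeft fun z w h => ?_).mpr fun z hz => ?_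
  · rwa [plusPairing_apply, add_comm]
  · obtain ⟨X, α⟩ := z
    have hα : α = 0 := LinearMap.ext fun Y => by simpa using hz (Y, 0)
    have hX : X = 0 := (forall_dual_apply_eq_zero_iff K X).mp fun β => by simpa using hz (0, β)
    exact Prod.ext hX hα

lemma finrank_prod_dual [FiniteDimensional K V₁] :
    finrank K (V₁ × Dual K V₁) = 2 * finrank K V₁ := by
  rw [finrank_prod, Subspace.dual_finrank_eq, two_mul]

variable (f : V₁ →ₗ[K] V₂)

lemma plusPairing_prodMap_dualMap (u v : V₁ × Dual K V₂) :
    plusPairing K V₁ (id.prodMap f.dualMap u) (id.prodMap f.dualMap v) =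
      plusPairing K V₂ (f.prodMap id u) (f.prodMap id v) := rfl

lemma disjoint_ker_prodMap_id_ker_id_prodMap :
    Disjoint (ker (f.prodMap (id : Dual K V₂ →ₗ[K] Dual K V₂)))
      (ker ((id : V₁ →ₗ[K] V₁).prodMap f.dualMap)) := by
  rw [disjoint_def]
  rintro ⟨X, β⟩ hg hh
  have hX : X = 0 := congrArg Prod.fst (mem_ker.mp hh)
  have hβ : β = 0 := congrArg Prod.snd (mem_ker.mp hg)
  rw [hX, hβ, Prod.mk_zero_zero]

lemma orthogonal_range_prodMap_id :
    (plusPairing K V₂).orthogonal (range (f.prodMap id)) =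
      (ker (id.prodMap f.dualMap)).map (f.prodMap id) := by
  ext ⟨Y, β⟩
  simp only [range_prodMap, range_id, BilinForm.mem_orthogonal_iff, mem_prod, mem_range, mem_top,
    and_true, plusPairing_apply, forall_exists_index, Prod.forall, ker_prodMap, ker_id, mem_map,
    mem_bot, mem_ker, prodMap_apply, id_coe, id_eq, Prod.mk.injEq, Prod.exists,
    exists_eq_right_right, ↓existsAndEq, true_and, map_zero]
  constructor
  · intro h
    refine ⟨LinearMap.ext fun X => by simpa using h _ 0 X rfl, ?_⟩
    exact ((forall_dual_apply_eq_zero_iff K Y).mp fun γ => by simpa using h 0 γ 0 (map_zero f)).symm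
  · rintro ⟨hβ, rfl⟩ _ γ X rfl
    simpa using LinearMap.congr_fun hβ X

lemma orthogonal_range_id_prodMap_dualMap :
    (plusPairing K V₁).orthogonal (range (id.prodMap f.dualMap)) =
      (ker (f.prodMap id)).map (id.prodMap f.dualMap) := by
  ext ⟨Y, β⟩
  simp only [range_prodMap, range_id, BilinForm.mem_orthogonal_iff, mem_prod, mem_top, mem_range,
    true_and, plusPairing_apply, forall_exists_index, Prod.forall, forall_apply_eq_imp_iff,
    dualMap_apply, ker_prodMap, ker_id, mem_map, mem_ker, mem_bot, prodMap_apply, id_coe, id_eq,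
    Prod.mk.injEq, Prod.exists, ↓existsAndEq, and_true, map_zero]
  constructor
  · intro h
    refine ⟨(forall_dual_apply_eq_zero_iff K (f Y)).mp fun γ => by simpa using h 0 γ, ?_⟩
    exact (LinearMap.ext fun X => by simpa using h X 0).symm
  · rintro ⟨hY, rfl⟩ X γ
    simp [hY]

def backwardImage (L : Submodule K (V₂ × Dual K V₂)) : Submodule K (V₁ × Dual K V₁) :=
  (L.comap (f.prodMap id)).map (id.prodMap f.dualMap)

def forwardImage (L : Submodule K (V₁ × Dual K V₁)) : Submodule K (V₂ × Dual K V₂) :=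
  (L.comap (id.prodMap f.dualMap)).map (f.prodMap id)

lemma mem_backwardImage (L : Submodule K (V₂ × Dual K V₂)) (p : V₁ × Dual K V₁) :
    p ∈ backwardImage f L ↔ ∃ β : Dual K V₂, p.2 = β ∘ₗ f ∧ (f p.1, β) ∈ L := by
  obtain ⟨X, α⟩ := p
  simp only [backwardImage, mem_map, mem_comap, prodMap_apply, id_coe, id_eq, Prod.exists,
    Prod.mk.injEq]
  constructor
  · rintro ⟨_, β, hβ, rfl, rfl⟩
    exact ⟨β, rfl, hβ⟩
  · rintro ⟨β, rfl, hβ⟩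
    exact ⟨X, β, hβ, rfl, rfl⟩

lemma mem_forwardImage (L : Submodule K (V₁ × Dual K V₁)) (q : V₂ × Dual K V₂) :
    q ∈ forwardImage f L ↔ ∃ X : V₁, q.1 = f X ∧ (X, q.2 ∘ₗ f) ∈ L := by
  obtain ⟨Y, β⟩ := q
  simp only [forwardImage, mem_map, mem_comap, prodMap_apply, id_coe, id_eq, Prod.exists,
    Prod.mk.injEq]
  constructor
  · rintro ⟨X, _, hX, rfl, rfl⟩
    exact ⟨X, rfl, hX⟩
  · rintro ⟨X, rfl, hX⟩
    exact ⟨X, β, hX, rfl, rfl⟩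

def IsDiracStructure (L : Submodule K (V₁ × Dual K V₁)) : Prop :=
  (∀ z ∈ L, ∀ w ∈ L, plusPairing K V₁ z w = 0) ∧ finrank K L = finrank K V₁

lemma IsDiracStructure.orthogonal_eq_self [FiniteDimensional K V₁]
    {L : Submodule K (V₁ × Dual K V₁)} (hL : IsDiracStructure L) :
    (plusPairing K V₁).orthogonal L = L :=
  BilinForm.orthogonal_eq_self_of_isotropic plusPairing_nondegenerate hL.1
    (by rw [finrank_prod_dual, hL.2])

variable [FiniteDimensional K V₁] [FiniteDimensional K V₂]

theorem IsDiracStructure.backwardImage {L : Submodule K (V₂ × Dual K V₂)}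
    (hL : IsDiracStructure L) : IsDiracStructure (backwardImage f L) := by
  refine ⟨BilinForm.isotropic_map_comap _ _ (plusPairing_prodMap_dualMap f) hL.1, ?_⟩
  have hdim := BilinForm.finrank_map_comap_add_finrank plusPairing_nondegenerate _ _
    (orthogonal_range_prodMap_id f) (disjoint_ker_prodMap_id_ker_id_prodMap f) hL.orthogonal_eq_self
  rw [finrank_prod, Subspace.dual_finrank_eq, hL.2] at hdim
  exact Nat.add_right_cancel hdim

theorem IsDiracStructure.forwardImage {L : Submodule K (V₁ × Dual K V₁)}
    (hL : IsDiracStructure L) : IsDiracStructure (forwardImage f L) := by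
  refine ⟨BilinForm.isotropic_map_comap _ _
    (fun u v => (plusPairing_prodMap_dualMap f u v).symm) hL.1, ?_⟩
  have hdim := BilinForm.finrank_map_comap_add_finrank plusPairing_nondegenerate _ _
    (orthogonal_range_id_prodMap_dualMap f) (disjoint_ker_prodMap_id_ker_id_prodMap f).symm
    hL.orthogonal_eq_self
  rw [finrank_prod, Subspace.dual_finrank_eq, hL.2, add_comm] at hdim
  exact Nat.add_left_cancel hdim

end DualSum

/-- Backward and forward images of vector Dirac structures under a linear map
`f : V₁ → V₂` are again vector Dirac structures. -/
theorem stmt_9 (V₁ V₂ : Type*) [AddCommGroup V₁] [Module ℝ V₁] [FiniteDimensional ℝ V₁]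
    [AddCommGroup V₂] [Module ℝ V₂] [FiniteDimensional ℝ V₂] (f : V₁ →ₗ[ℝ] V₂) :
    (∀ L : Submodule ℝ (V₂ × Module.Dual ℝ V₂),
      (∀ z ∈ L, ∀ w ∈ L, z.2 w.1 + w.2 z.1 = 0) →
      Module.finrank ℝ L = Module.finrank ℝ V₂ →
      ∃ Lb : Submodule ℝ (V₁ × Module.Dual ℝ V₁),
        (Lb : Set (V₁ × Module.Dual ℝ V₁)) =
          {p | ∃ β : Module.Dual ℝ V₂, p.2 = β ∘ₗ f ∧ (f p.1, β) ∈ L} ∧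
        (∀ z ∈ Lb, ∀ w ∈ Lb, z.2 w.1 + w.2 z.1 = 0) ∧
        Module.finrank ℝ Lb = Module.finrank ℝ V₁) ∧
    (∀ L : Submodule ℝ (V₁ × Module.Dual ℝ V₁),
      (∀ z ∈ L, ∀ w ∈ L, z.2 w.1 + w.2 z.1 = 0) →
      Module.finrank ℝ L = Module.finrank ℝ V₁ →
      ∃ Lf : Submodule ℝ (V₂ × Module.Dual ℝ V₂),
        (Lf : Set (V₂ × Module.Dual ℝ V₂)) =
          {q | ∃ X : V₁, q.1 = f X ∧ (X, q.2 ∘ₗ f) ∈ L} ∧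
        (∀ z ∈ Lf, ∀ w ∈ Lf, z.2 w.1 + w.2 z.1 = 0) ∧
        Module.finrank ℝ Lf = Module.finrank ℝ V₂) := by
  refine ⟨fun L hiso hdim => ?_, fun L hiso hdim => ?_⟩
  · obtain ⟨hiso', hdim'⟩ := IsDiracStructure.backwardImage f ⟨hiso, hdim⟩
    exact ⟨backwardImage f L, Set.ext (mem_backwardImage f L), hiso', hdim'⟩
  · obtain ⟨hiso', hdim'⟩ := IsDiracStructure.forwardImage f ⟨hiso, hdim⟩
    exact ⟨forwardImage f L, Set.ext (mem_forwardImage f L), hiso', hdim'⟩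
end

section
/- Let f : V₁ → V₂ be a linear map between finite-dimensional real vector spaces and L a vector Dirac structure on V₁. Then f*(f_*L) = L if and only if ker(f) ⊆ Ker(L), where Ker(L) = {X ∈ V₁ : (X,0) ∈ L}. -/
/-!
An element of `f*(f₊L)` is `(Y, β ∘ f)` for some `(X, β ∘ f) ∈ L` with `f X = f Y`, so it differs
from an element of `L` by `(Y - X, 0)` with `Y - X ∈ ker f`; hence `f*(f₊L) ⊆ L` exactly when
`ker f × {0} ⊆ L`. In that case isotropy makes every covector component of `L` annihilate `ker f`,
so it factors through `f`, which gives `L ⊆ f*(f₊L)`.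
-/

open Module

namespace Dirac

variable {K V₁ V₂ : Type*} [Field K] [AddCommGroup V₁] [Module K V₁]
  [AddCommGroup V₂] [Module K V₂] (f : V₁ →ₗ[K] V₂)

def pushforward (L : Submodule K (V₁ × Dual K V₁)) : Set (V₂ × Dual K V₂) :=
  {q | ∃ X : V₁, q.1 = f X ∧ (X, q.2 ∘ₗ f) ∈ L}

def pullback (M : Set (V₂ × Dual K V₂)) : Set (V₁ × Dual K V₁) :=
  {p | ∃ β : Dual K V₂, p.2 = β ∘ₗ f ∧ (f p.1, β) ∈ M}

variable {f} {L : Submodule K (V₁ × Dual K V₁)}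

theorem mem_pullback_pushforward_of_mem_ker {X : V₁} (hX : X ∈ LinearMap.ker f) :
    (X, 0) ∈ pullback f (pushforward f L) :=
  ⟨0, (LinearMap.zero_comp f).symm, 0, by simpa using hX,
    by rw [LinearMap.zero_comp]; exact L.zero_mem⟩

theorem pullback_pushforward_subset (hker : ∀ X ∈ LinearMap.ker f, (X, 0) ∈ L) :
    pullback f (pushforward f L) ⊆ L := by
  rintro ⟨Y, ξ⟩ ⟨β, rfl, X, hfX, hXL⟩
  have hdiff : (Y - X, 0) ∈ L := hker _ (by simpa [sub_eq_zero] using hfX)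
  simpa using L.add_mem hdiff hXL

theorem snd_mem_dualAnnihilator_ker (hiso : ∀ z ∈ L, ∀ w ∈ L, z.2 w.1 + w.2 z.1 = 0)
    (hker : ∀ X ∈ LinearMap.ker f, (X, 0) ∈ L) {z : V₁ × Dual K V₁} (hz : z ∈ L) :
    z.2 ∈ (LinearMap.ker f).dualAnnihilator :=
  (Submodule.mem_dualAnnihilator _).2 fun w hw ↦ by simpa using hiso z hz (w, 0) (hker w hw)

theorem subset_pullback_pushforward (hiso : ∀ z ∈ L, ∀ w ∈ L, z.2 w.1 + w.2 z.1 = 0)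
    (hker : ∀ X ∈ LinearMap.ker f, (X, 0) ∈ L) :
    (L : Set (V₁ × Dual K V₁)) ⊆ pullback f (pushforward f L) := by
  intro z hz
  obtain ⟨β, hβ⟩ : z.2 ∈ LinearMap.range f.dualMap := by
    rw [LinearMap.range_dualMap_eq_dualAnnihilator_ker]
    exact snd_mem_dualAnnihilator_ker hiso hker hz
  have hβf : β ∘ₗ f = z.2 := hβ
  exact ⟨β, hβf.symm, z.1, rfl, by rwa [hβf]⟩

theorem pullback_pushforward_eq_iff (hiso : ∀ z ∈ L, ∀ w ∈ L, z.2 w.1 + w.2 z.1 = 0) :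
    pullback f (pushforward f L) = L ↔ ∀ X ∈ LinearMap.ker f, (X, 0) ∈ L := by
  refine ⟨fun h X hX ↦ ?_, fun hker ↦ ?_⟩
  · rw [← SetLike.mem_coe, ← h]
    exact mem_pullback_pushforward_of_mem_ker hX
  · exact (pullback_pushforward_subset hker).antisymm (subset_pullback_pushforward hiso hker)

end Dirac

theorem stmt_10_general (V₁ V₂ : Type*) [AddCommGroup V₁] [Module ℝ V₁]
    [AddCommGroup V₂] [Module ℝ V₂] (f : V₁ →ₗ[ℝ] V₂)
    (L : Submodule ℝ (V₁ × Module.Dual ℝ V₁))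
    (hiso : ∀ z ∈ L, ∀ w ∈ L, z.2 w.1 + w.2 z.1 = 0) :
    {p : V₁ × Module.Dual ℝ V₁ | ∃ β : Module.Dual ℝ V₂, p.2 = β ∘ₗ f ∧
        (f p.1, β) ∈ {q : V₂ × Module.Dual ℝ V₂ | ∃ X : V₁, q.1 = f X ∧ (X, q.2 ∘ₗ f) ∈ L}}
      = (L : Set (V₁ × Module.Dual ℝ V₁)) ↔
    ∀ X ∈ LinearMap.ker f, (X, (0 : Module.Dual ℝ V₁)) ∈ L :=
  Dirac.pullback_pushforward_eq_iff hiso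

/-- For a linear map `f : V₁ → V₂` and a vector Dirac structure `L` on `V₁`:
`f*(f₊L) = L` iff `ker f ⊆ Ker L = {X : (X,0) ∈ L}`. -/
theorem stmt_10 (V₁ V₂ : Type*) [AddCommGroup V₁] [Module ℝ V₁] [FiniteDimensional ℝ V₁]
    [AddCommGroup V₂] [Module ℝ V₂] [FiniteDimensional ℝ V₂] (f : V₁ →ₗ[ℝ] V₂)
    (L : Submodule ℝ (V₁ × Module.Dual ℝ V₁))
    (hiso : ∀ z ∈ L, ∀ w ∈ L, z.2 w.1 + w.2 z.1 = 0)
    (hdim : Module.finrank ℝ L = Module.finrank ℝ V₁) :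
    {p : V₁ × Module.Dual ℝ V₁ | ∃ β : Module.Dual ℝ V₂, p.2 = β ∘ₗ f ∧
        (f p.1, β) ∈ {q : V₂ × Module.Dual ℝ V₂ | ∃ X : V₁, q.1 = f X ∧ (X, q.2 ∘ₗ f) ∈ L}}
      = (L : Set (V₁ × Module.Dual ℝ V₁)) ↔
    ∀ X ∈ LinearMap.ker f, (X, (0 : Module.Dual ℝ V₁)) ∈ L :=
  stmt_10_general V₁ V₂ f L hiso
end

section
/- Let f : V₁ → V₂ be a linear map between finite-dimensional real vector spaces and L a vector Dirac structure on V₂. Then f_*(f*L) = L if and only if the image of f contains pr₁(L) ⊆ V₂. -/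
/-!
A vector Dirac structure `L ⊆ V ⊕ V*` is Lagrangian for the pairing
`⟨(v, α), (w, β)⟩ = α w + β v`, so `(0, γ) ∈ L` as soon as `γ` annihilates `pr₁ L`.
If `pr₁ L ⊆ im f`, a point `(f X, α)` of `f_*(f^*L)` comes with some `(f X, β) ∈ L` where
`α - β` vanishes on `im f`, hence `(f X, α) = (f X, β) + (0, α - β) ∈ L`; the reverse
inclusion is immediate. Conversely `f_*(f^*L) = L` forces `pr₁ L ⊆ im f`, since every first
component of `f_*(f^*L)` lies in `im f`.
-/

open Module LinearMap

namespace Dirac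

variable {V : Type*} [AddCommGroup V] [Module ℝ V]

variable (V) in
noncomputable def pairing : LinearMap.BilinForm ℝ (V × Dual ℝ V) :=
  mk₂ ℝ (fun z w => z.2 w.1 + w.2 z.1)
    (by intros; simp; ring) (by intros; simp; ring)
    (by intros; simp; ring) (by intros; simp; ring)

lemma pairing_apply (z w : V × Dual ℝ V) : pairing V z w = z.2 w.1 + w.2 z.1 := rfl

lemma pairing_isSymm : LinearMap.IsSymm (pairing V) :=
  ⟨fun z w => by simp only [pairing_apply, RingHom.id_apply]; ring⟩

lemma pairing_nondegenerate : (pairing V).Nondegenerate := by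
  refine (pairing_isSymm.isRefl.nondegenerate_iff_separatingLeft).mpr fun z hz => ?_
  have h₂ : z.2 = 0 := by
    ext v
    simpa [pairing_apply] using hz (v, 0)
  have h₁ : z.1 = 0 := by
    refine (forall_dual_apply_eq_zero_iff ℝ _).mp fun β => ?_
    simpa [pairing_apply, h₂] using hz (0, β)
  exact Prod.ext h₁ h₂

lemma orthogonal_eq_of_isotropic_of_finrank_eq [FiniteDimensional ℝ V]
    {L : Submodule ℝ (V × Dual ℝ V)} (hiso : ∀ z ∈ L, ∀ w ∈ L, z.2 w.1 + w.2 z.1 = 0)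
    (hdim : finrank ℝ L = finrank ℝ V) :
    (pairing V).orthogonal L = L := by
  have hle : L ≤ (pairing V).orthogonal L := fun z hz =>
    (LinearMap.BilinForm.mem_orthogonal_iff).mpr fun w hw => hiso w hw z hz
  have hfinrank : finrank ℝ (V × Dual ℝ V) = 2 * finrank ℝ V := by
    rw [finrank_prod, Subspace.dual_finrank_eq]; ring
  refine (Submodule.eq_of_le_of_finrank_le hle ?_).symm
  rw [LinearMap.BilinForm.finrank_orthogonal pairing_nondegenerate, hfinrank, hdim]
  omega

lemma zero_prod_mem_of_forall_mem {L : Submodule ℝ (V × Dual ℝ V)}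
    (hL : (pairing V).orthogonal L = L) {γ : Dual ℝ V} (hγ : ∀ z ∈ L, γ z.1 = 0) :
    ((0 : V), γ) ∈ L := by
  rw [← hL, LinearMap.BilinForm.mem_orthogonal_iff]
  intro z hz
  simp [pairing_apply, hγ z hz]

lemma prod_mem_of_comp_eq {V₁ : Type*} [AddCommGroup V₁] [Module ℝ V₁] {f : V₁ →ₗ[ℝ] V}
    {L : Submodule ℝ (V × Dual ℝ V)} (hL : (pairing V).orthogonal L = L)
    (hrange : L.map (fst ℝ V (Dual ℝ V)) ≤ range f) {v : V} {α β : Dual ℝ V}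
    (hβ : (v, β) ∈ L) (hαβ : α ∘ₗ f = β ∘ₗ f) : (v, α) ∈ L := by
  have hγ : ∀ z ∈ L, (α - β) z.1 = 0 := fun z hz => by
    obtain ⟨X, hX⟩ := hrange (Submodule.mem_map_of_mem (f := fst ℝ V (Dual ℝ V)) hz)
    rw [LinearMap.sub_apply, sub_eq_zero, ← fst_apply (R := ℝ) z, ← hX]
    exact congr($hαβ X)
  simpa using L.add_mem hβ (zero_prod_mem_of_forall_mem hL hγ)

end Dirac

theorem stmt_11_general (V₁ V₂ : Type*) [AddCommGroup V₁] [Module ℝ V₁]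
    [AddCommGroup V₂] [Module ℝ V₂] [FiniteDimensional ℝ V₂] (f : V₁ →ₗ[ℝ] V₂)
    (L : Submodule ℝ (V₂ × Module.Dual ℝ V₂))
    (hiso : ∀ z ∈ L, ∀ w ∈ L, z.2 w.1 + w.2 z.1 = 0)
    (hdim : Module.finrank ℝ L = Module.finrank ℝ V₂) :
    {q : V₂ × Module.Dual ℝ V₂ | ∃ X : V₁, q.1 = f X ∧
        (X, q.2 ∘ₗ f) ∈ {p : V₁ × Module.Dual ℝ V₁ | ∃ β : Module.Dual ℝ V₂,
          p.2 = β ∘ₗ f ∧ (f p.1, β) ∈ L}}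
      = (L : Set (V₂ × Module.Dual ℝ V₂)) ↔
    Submodule.map (LinearMap.fst ℝ V₂ (Module.Dual ℝ V₂)) L ≤ LinearMap.range f := by
  constructor
  · rintro h _ ⟨⟨v, α⟩, hvα, rfl⟩
    rw [← h] at hvα
    obtain ⟨X, hX, -⟩ := hvα
    exact ⟨X, hX.symm⟩
  · intro hrange
    have hL := Dirac.orthogonal_eq_of_isotropic_of_finrank_eq hiso hdim
    ext ⟨v, α⟩
    constructor
    · rintro ⟨X, rfl, β, hαβ, hβ⟩
      exact Dirac.prod_mem_of_comp_eq hL hrange hβ hαβ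
    · intro hvα
      obtain ⟨X, hX⟩ := hrange (Submodule.mem_map_of_mem hvα)
      exact ⟨X, hX.symm, α, rfl, by simpa [hX] using hvα⟩

/-- For a linear map `f : V₁ → V₂` and a vector Dirac structure `L` on `V₂`:
`f₊(f*L) = L` iff the image of `f` contains `pr₁(L)`. -/
theorem stmt_11 (V₁ V₂ : Type*) [AddCommGroup V₁] [Module ℝ V₁] [FiniteDimensional ℝ V₁]
    [AddCommGroup V₂] [Module ℝ V₂] [FiniteDimensional ℝ V₂] (f : V₁ →ₗ[ℝ] V₂)
    (L : Submodule ℝ (V₂ × Module.Dual ℝ V₂))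
    (hiso : ∀ z ∈ L, ∀ w ∈ L, z.2 w.1 + w.2 z.1 = 0)
    (hdim : Module.finrank ℝ L = Module.finrank ℝ V₂) :
    {q : V₂ × Module.Dual ℝ V₂ | ∃ X : V₁, q.1 = f X ∧
        (X, q.2 ∘ₗ f) ∈ {p : V₁ × Module.Dual ℝ V₁ | ∃ β : Module.Dual ℝ V₂,
          p.2 = β ∘ₗ f ∧ (f p.1, β) ∈ L}}
      = (L : Set (V₂ × Module.Dual ℝ V₂)) ↔
    Submodule.map (LinearMap.fst ℝ V₂ (Module.Dual ℝ V₂)) L ≤ LinearMap.range f :=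
  stmt_11_general V₁ V₂ f L hiso hdim
end

section
/- Let f : V₁ → V₂ be a linear map between finite-dimensional real vector spaces. Then f*(f_*L) = L holds for every vector Dirac structure L on V₁ if and only if f is injective; and f_*(f*L) = L holds for every vector Dirac structure L on V₂ if and only if f is surjective. -/
open Module

private lemma finrank_bot_prod_top (M N : Type*) [AddCommGroup M] [Module ℝ M]
    [AddCommGroup N] [Module ℝ N] [FiniteDimensional ℝ N] :
    finrank ℝ ((⊥ : Submodule ℝ M).prod (⊤ : Submodule ℝ N)) = finrank ℝ N := by
  have h : (⊥ : Submodule ℝ M).prod (⊤ : Submodule ℝ N)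
      = LinearMap.range (LinearMap.inr ℝ M N) := by
    ext x
    simp [Submodule.mem_prod, LinearMap.mem_range, Prod.ext_iff, eq_comm]
  rw [h, LinearMap.finrank_range_of_inj LinearMap.inr_injective]

private lemma finrank_top_prod_bot (M N : Type*) [AddCommGroup M] [Module ℝ M]
    [AddCommGroup N] [Module ℝ N] [FiniteDimensional ℝ M] :
    finrank ℝ ((⊤ : Submodule ℝ M).prod (⊥ : Submodule ℝ N)) = finrank ℝ M := by
  have h : (⊤ : Submodule ℝ M).prod (⊥ : Submodule ℝ N)
      = LinearMap.range (LinearMap.inl ℝ M N) := by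
    ext x
    simp [Submodule.mem_prod, LinearMap.mem_range, Prod.ext_iff, eq_comm]
  rw [h, LinearMap.finrank_range_of_inj LinearMap.inl_injective]

/-- `f*(f₊L) = L` for all vector Dirac structures `L` on `V₁` iff `f` is injective, and
`f₊(f*L) = L` for all vector Dirac structures `L` on `V₂` iff `f` is surjective. -/
theorem stmt_12 (V₁ V₂ : Type*) [AddCommGroup V₁] [Module ℝ V₁] [FiniteDimensional ℝ V₁]
    [AddCommGroup V₂] [Module ℝ V₂] [FiniteDimensional ℝ V₂] (f : V₁ →ₗ[ℝ] V₂) :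
    ((∀ L : Submodule ℝ (V₁ × Module.Dual ℝ V₁),
        (∀ z ∈ L, ∀ w ∈ L, z.2 w.1 + w.2 z.1 = 0) →
        Module.finrank ℝ L = Module.finrank ℝ V₁ →
        {p : V₁ × Module.Dual ℝ V₁ | ∃ β : Module.Dual ℝ V₂, p.2 = β ∘ₗ f ∧
            (f p.1, β) ∈ {q : V₂ × Module.Dual ℝ V₂ | ∃ X : V₁, q.1 = f X ∧
              (X, q.2 ∘ₗ f) ∈ L}}
          = (L : Set (V₁ × Module.Dual ℝ V₁))) ↔
      Function.Injective f) ∧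
    ((∀ L : Submodule ℝ (V₂ × Module.Dual ℝ V₂),
        (∀ z ∈ L, ∀ w ∈ L, z.2 w.1 + w.2 z.1 = 0) →
        Module.finrank ℝ L = Module.finrank ℝ V₂ →
        {q : V₂ × Module.Dual ℝ V₂ | ∃ X : V₁, q.1 = f X ∧
            (X, q.2 ∘ₗ f) ∈ {p : V₁ × Module.Dual ℝ V₁ | ∃ β : Module.Dual ℝ V₂,
              p.2 = β ∘ₗ f ∧ (f p.1, β) ∈ L}}
          = (L : Set (V₂ × Module.Dual ℝ V₂))) ↔
      Function.Surjective f) := by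
  constructor
  · constructor
    · -- equality for all Dirac L implies injective
      intro h
      rw [← LinearMap.ker_eq_bot, LinearMap.ker_eq_bot']
      intro v hv
      have hiso : ∀ z ∈ (⊥ : Submodule ℝ V₁).prod (⊤ : Submodule ℝ (Module.Dual ℝ V₁)),
          ∀ w ∈ (⊥ : Submodule ℝ V₁).prod (⊤ : Submodule ℝ (Module.Dual ℝ V₁)),
          z.2 w.1 + w.2 z.1 = 0 := by
        rintro z hz w hw
        rw [Submodule.mem_prod] at hz hw
        simp only [Submodule.mem_bot] at hz hw
        rw [hz.1, hw.1]
        simp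
      have hdim := finrank_bot_prod_top V₁ (Module.Dual ℝ V₁)
      rw [Subspace.dual_finrank_eq] at hdim
      have hL := h _ hiso hdim
      have hmem : (v, (0 : Module.Dual ℝ V₁)) ∈
          {p : V₁ × Module.Dual ℝ V₁ | ∃ β : Module.Dual ℝ V₂, p.2 = β ∘ₗ f ∧
            (f p.1, β) ∈ {q : V₂ × Module.Dual ℝ V₂ | ∃ X : V₁, q.1 = f X ∧
              (X, q.2 ∘ₗ f) ∈ (⊥ : Submodule ℝ V₁).prod (⊤ : Submodule ℝ (Module.Dual ℝ V₁))}} := by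
        refine ⟨0, by simp, 0, by simp [hv], ?_⟩
        simp [Submodule.mem_prod]
      rw [hL] at hmem
      have := (Submodule.mem_prod.mp hmem).1
      simpa using this
    · -- injective implies equality for all L
      intro hf L _ _
      ext p
      simp only [Set.mem_setOf_eq, SetLike.mem_coe]
      constructor
      · rintro ⟨β, hp2, X, hfX, hXL⟩
        have hX : p.1 = X := hf hfX
        have : p = (X, β ∘ₗ f) := Prod.ext hX hp2
        rw [this]
        exact hXL
      · intro hp
        obtain ⟨g, hg⟩ := f.exists_leftInverse_of_injective (LinearMap.ker_eq_bot.mpr hf)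
        have hcomp : p.2 = (p.2 ∘ₗ g) ∘ₗ f := by
          rw [LinearMap.comp_assoc, hg, LinearMap.comp_id]
        refine ⟨p.2 ∘ₗ g, hcomp, p.1, rfl, ?_⟩
        rw [← hcomp]
        exact hp
  · constructor
    · -- equality for all Dirac L implies surjective
      intro h v
      have hiso : ∀ z ∈ (⊤ : Submodule ℝ V₂).prod (⊥ : Submodule ℝ (Module.Dual ℝ V₂)),
          ∀ w ∈ (⊤ : Submodule ℝ V₂).prod (⊥ : Submodule ℝ (Module.Dual ℝ V₂)),
          z.2 w.1 + w.2 z.1 = 0 := by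
        rintro z hz w hw
        rw [Submodule.mem_prod] at hz hw
        simp only [Submodule.mem_bot] at hz hw
        rw [hz.2, hw.2]
        simp
      have hdim := finrank_top_prod_bot V₂ (Module.Dual ℝ V₂)
      have hL := h _ hiso hdim
      have hmem : (v, (0 : Module.Dual ℝ V₂)) ∈
          ((⊤ : Submodule ℝ V₂).prod (⊥ : Submodule ℝ (Module.Dual ℝ V₂)) :
            Set (V₂ × Module.Dual ℝ V₂)) := by
        simp [Submodule.mem_prod]
      rw [← hL] at hmem
      obtain ⟨X, hX, _⟩ := hmem
      exact ⟨X, hX.symm⟩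
    · -- surjective implies equality for all L
      intro hf L _ _
      ext q
      simp only [Set.mem_setOf_eq, SetLike.mem_coe]
      constructor
      · rintro ⟨X, hq1, β', hβ, hmem⟩
        have hq2 : q.2 = β' := by
          ext v
          obtain ⟨x, rfl⟩ := hf v
          exact DFunLike.congr_fun hβ x
        have : q = (f X, β') := Prod.ext hq1 hq2
        rw [this]
        exact hmem
      · intro hq
        obtain ⟨X, hX⟩ := hf q.1
        refine ⟨X, hX.symm, q.2, rfl, ?_⟩
        rw [hX, Prod.mk.eta]
        exact hq
end

section
/- Let A and B be unital algebras over a commutative ring k, and let X be an invertible (A,B)-bimodule (i.e., there is a (B,A)-bimodule Y with X ⊗_B Y ≅ A and Y ⊗_A X ≅ B as bimodules). Then the centers Z(A) and Z(B) are isomorphic as k-algebras; explicitly, for each b ∈ Z(B) there is a unique a ∈ Z(A) with a·x = x·b for all x ∈ X, and b ↦ a is a k-algebra isomorphism Z(B) → Z(A). -/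
open MulOpposite

/-- Morita invariance of the center: if `X` is an invertible `(A,B)`-bimodule (invertibility
being witnessed by an inverse bimodule `Y` and a surjective Morita context `(μ, τ)`, which
encodes the bimodule isomorphisms `X ⊗_B Y ≅ A` and `Y ⊗_A X ≅ B`), then for each central
`b ∈ Z(B)` there is a unique central `a ∈ Z(A)` with `a·x = x·b` for all `x ∈ X`, and
`b ↦ a` is a `k`-algebra isomorphism `Z(B) ≃ Z(A)`. -/
theorem stmt_16 (k A B X Y : Type*) [CommRing k] [Ring A] [Ring B]
    [Algebra k A] [Algebra k B]
    [AddCommGroup X] [Module A X] [Module Bᵐᵒᵖ X]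
    [AddCommGroup Y] [Module B Y] [Module Aᵐᵒᵖ Y]
    -- commuting actions (bimodule conditions), compatible with k
    (hX : ∀ (a : A) (b : Bᵐᵒᵖ) (x : X), a • b • x = b • a • x)
    (hY : ∀ (b : B) (a : Aᵐᵒᵖ) (y : Y), b • a • y = a • b • y)
    (hkX : ∀ (c : k) (x : X), algebraMap k A c • x = op (algebraMap k B c) • x)
    (hkY : ∀ (c : k) (y : Y), algebraMap k B c • y = op (algebraMap k A c) • y)
    -- Morita context: pairings
    (μ : X → Y → A) (τ : Y → X → B)
    (μadd₁ : ∀ x x' y, μ (x + x') y = μ x y + μ x' y)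
    (μadd₂ : ∀ x y y', μ x (y + y') = μ x y + μ x y')
    (τadd₁ : ∀ y y' x, τ (y + y') x = τ y x + τ y' x)
    (τadd₂ : ∀ y x x', τ y (x + x') = τ y x + τ y x')
    -- μ is an (A,A)-bimodule map, balanced over B
    (μA₁ : ∀ (a : A) x y, μ (a • x) y = a * μ x y)
    (μA₂ : ∀ x y (a : Aᵐᵒᵖ), μ x (a • y) = μ x y * unop a)
    (μbal : ∀ x (b : B) y, μ (op b • x) y = μ x (b • y))
    -- τ is a (B,B)-bimodule map, balanced over A
    (τB₁ : ∀ (b : B) y x, τ (b • y) x = b * τ y x)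
    (τB₂ : ∀ y x (b : Bᵐᵒᵖ), τ y (b • x) = τ y x * unop b)
    (τbal : ∀ y (a : A) x, τ (op a • y) x = τ y (a • x))
    -- associativity of the context
    (assoc₁ : ∀ x y x', μ x y • x' = op (τ y x') • x)
    (assoc₂ : ∀ y x y', τ y x • y' = op (μ x y') • y)
    -- surjectivity: the pairings induce isomorphisms X ⊗_B Y ≅ A, Y ⊗_A X ≅ B
    (μsurj : ∀ a : A, ∃ (m : ℕ) (xs : Fin m → X) (ys : Fin m → Y),
        a = ∑ i, μ (xs i) (ys i))
    (τsurj : ∀ b : B, ∃ (m : ℕ) (xs : Fin m → X) (ys : Fin m → Y),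
        b = ∑ i, τ (ys i) (xs i)) :
    (∀ b ∈ Set.center B, ∃! a : A, a ∈ Set.center A ∧ ∀ x : X, a • x = op b • x) ∧
    ∃ e : Subalgebra.center k B ≃ₐ[k] Subalgebra.center k A,
      ∀ (b : Subalgebra.center k B) (x : X), (e b : A) • x = op (b : B) • x := by
  classical
  obtain ⟨m, xs, ys, h1A⟩ := μsurj 1
  obtain ⟨n, vs, us, h1B⟩ := τsurj 1
  -- h1B : (1 : B) = ∑ j, τ (us j) (vs j) with vs : Fin n → X, us : Fin n → Y
  set φ : B → A := fun b => ∑ i, μ (xs i) (b • ys i) with hφdef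
  set ψ : A → B := fun a => ∑ j, τ (us j) (a • vs j) with hψdef
  -- faithfulness of the actions
  have keyA : ∀ a : A, a = ∑ i, μ (a • xs i) (ys i) := by
    intro a
    calc a = a * 1 := (mul_one a).symm
    _ = ∑ i, a * μ (xs i) (ys i) := by rw [h1A, Finset.mul_sum]
    _ = ∑ i, μ (a • xs i) (ys i) := by simp [μA₁]
  have faithX : ∀ a a' : A, (∀ x : X, a • x = a' • x) → a = a' := by
    intro a a' h
    rw [keyA a, keyA a']
    exact Finset.sum_congr rfl fun i _ => by rw [h]
  have keyB : ∀ b : B, b = ∑ j, τ (b • us j) (vs j) := by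
    intro b
    calc b = b * 1 := (mul_one b).symm
    _ = ∑ j, b * τ (us j) (vs j) := by rw [h1B, Finset.mul_sum]
    _ = ∑ j, τ (b • us j) (vs j) := by simp [τB₁]
  have faithY : ∀ b b' : B, (∀ y : Y, b • y = b' • y) → b = b' := by
    intro b b' h
    rw [keyB b, keyB b']
    exact Finset.sum_congr rfl fun j _ => by rw [h]
  -- the defining property of φ
  have hφX : ∀ b ∈ Set.center B, ∀ x : X, φ b • x = op b • x := by
    intro b hb x
    have hb' : ∀ t : B, b * t = t * b := fun t => (Semigroup.mem_center_iff.mp hb t).symm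
    calc φ b • x = ∑ i, μ (xs i) (b • ys i) • x := Finset.sum_smul
    _ = ∑ i, (op b * op (τ (ys i) x)) • xs i := by simp [assoc₁, τB₁, hb']
    _ = op b • ∑ i, op (τ (ys i) x) • xs i := by
        simp [mul_smul, Finset.smul_sum]
    _ = op b • ∑ i, μ (xs i) (ys i) • x := by simp [assoc₁]
    _ = op b • x := by rw [← Finset.sum_smul, ← h1A, one_smul]
  -- the defining property of ψ
  have hψY : ∀ a ∈ Set.center A, ∀ y : Y, ψ a • y = op a • y := by
    intro a ha y
    have ha' : ∀ t : A, a * t = t * a := fun t => (Semigroup.mem_center_iff.mp ha t).symm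
    calc ψ a • y = ∑ j, τ (us j) (a • vs j) • y := Finset.sum_smul
    _ = ∑ j, (op a * op (μ (vs j) y)) • us j := by simp [assoc₂, μA₁, ha']
    _ = op a • ∑ j, op (μ (vs j) y) • us j := by
        simp [mul_smul, Finset.smul_sum]
    _ = op a • ∑ j, τ (us j) (vs j) • y := by simp [assoc₂]
    _ = op a • y := by rw [← Finset.sum_smul, ← h1B, one_smul]
  -- φ b commutes with generators μ u v
  have lemL : ∀ b ∈ Set.center B, ∀ (u : X) (v : Y), φ b * μ u v = μ u (b • v) := by
    intro b hb u v
    rw [← μA₁, hφX b hb u, μbal]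
  have lemR : ∀ b ∈ Set.center B, ∀ (u : X) (v : Y), μ u v * φ b = μ u (b • v) := by
    intro b hb u v
    have hb' : ∀ t : B, b * t = t * b := fun t => (Semigroup.mem_center_iff.mp hb t).symm
    calc μ u v * φ b = ∑ i, μ u v * μ (xs i) (b • ys i) := by rw [hφdef, Finset.mul_sum]
    _ = ∑ i, μ u ((τ v (xs i) * b) • ys i) := by simp [← μA₁, assoc₁, μbal, smul_smul]
    _ = ∑ i, μ u ((b * τ v (xs i)) • ys i) := by simp [hb']
    _ = ∑ i, μ u (b • op (μ (xs i) (ys i)) • v) := by simp [mul_smul, assoc₂]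
    _ = ∑ i, μ u (op (μ (xs i) (ys i)) • (b • v)) := by simp [hY]
    _ = ∑ i, μ u (b • v) * μ (xs i) (ys i) := by simp [μA₂]
    _ = μ u (b • v) := by rw [← Finset.mul_sum, ← h1A, mul_one]
  have hφcent : ∀ b ∈ Set.center B, φ b ∈ Set.center A := by
    intro b hb
    refine Semigroup.mem_center_iff.mpr fun g => ?_
    obtain ⟨p, gx, gy, hg⟩ := μsurj g
    rw [hg, Finset.sum_mul, Finset.mul_sum]
    exact Finset.sum_congr rfl fun i _ => by rw [lemR b hb, lemL b hb]
  -- ψ a commutes with generators τ v u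
  have lemL' : ∀ a ∈ Set.center A, ∀ (v : Y) (u : X), ψ a * τ v u = τ v (a • u) := by
    intro a ha v u
    rw [← τB₁, hψY a ha v, τbal]
  have lemR' : ∀ a ∈ Set.center A, ∀ (v : Y) (u : X), τ v u * ψ a = τ v (a • u) := by
    intro a ha v u
    have ha' : ∀ t : A, a * t = t * a := fun t => (Semigroup.mem_center_iff.mp ha t).symm
    calc τ v u * ψ a = ∑ j, τ v u * τ (us j) (a • vs j) := by rw [hψdef, Finset.mul_sum]
    _ = ∑ j, τ v ((μ u (us j) * a) • vs j) := by simp [← τB₁, assoc₂, τbal, smul_smul]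
    _ = ∑ j, τ v ((a * μ u (us j)) • vs j) := by simp [ha']
    _ = ∑ j, τ v (a • op (τ (us j) (vs j)) • u) := by simp [mul_smul, assoc₁]
    _ = ∑ j, τ v (op (τ (us j) (vs j)) • (a • u)) := by simp [hX]
    _ = ∑ j, τ v (a • u) * τ (us j) (vs j) := by simp [τB₂]
    _ = τ v (a • u) := by rw [← Finset.mul_sum, ← h1B, mul_one]
  have hψcent : ∀ a ∈ Set.center A, ψ a ∈ Set.center B := by
    intro a ha
    refine Semigroup.mem_center_iff.mpr fun g => ?_
    obtain ⟨p, gx, gy, hg⟩ := τsurj g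
    rw [hg, Finset.sum_mul, Finset.mul_sum]
    exact Finset.sum_congr rfl fun j _ => by rw [lemR' a ha, lemL' a ha]
  -- φ b acts correctly on Y as well
  have cross1 : ∀ b ∈ Set.center B, ∀ y : Y, b • y = op (φ b) • y := by
    intro b hb y
    have hb' : ∀ t : B, b * t = t * b := fun t => (Semigroup.mem_center_iff.mp hb t).symm
    have hc' : ∀ t : A, φ b * t = t * φ b :=
      fun t => (Semigroup.mem_center_iff.mp (hφcent b hb) t).symm
    calc b • y = (b * 1) • y := by rw [mul_one]
    _ = ∑ j, (b * τ (us j) (vs j)) • y := by rw [h1B, Finset.mul_sum, Finset.sum_smul]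
    _ = ∑ j, τ (us j) (φ b • vs j) • y := by simp [hb', τB₂, hφX b hb]
    _ = ∑ j, (op (φ b) * op (μ (vs j) y)) • us j := by simp [assoc₂, μA₁, hc']
    _ = op (φ b) • ∑ j, op (μ (vs j) y) • us j := by simp [mul_smul, Finset.smul_sum]
    _ = op (φ b) • ∑ j, τ (us j) (vs j) • y := by simp [assoc₂]
    _ = op (φ b) • y := by rw [← Finset.sum_smul, ← h1B, one_smul]
  have cross2 : ∀ a ∈ Set.center A, ∀ x : X, a • x = op (ψ a) • x := by
    intro a ha x
    have ha' : ∀ t : A, a * t = t * a := fun t => (Semigroup.mem_center_iff.mp ha t).symm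
    have hc' : ∀ t : B, ψ a * t = t * ψ a :=
      fun t => (Semigroup.mem_center_iff.mp (hψcent a ha) t).symm
    calc a • x = (a * 1) • x := by rw [mul_one]
    _ = ∑ i, (a * μ (xs i) (ys i)) • x := by rw [h1A, Finset.mul_sum, Finset.sum_smul]
    _ = ∑ i, μ (xs i) (ψ a • ys i) • x := by simp [ha', μA₂, hψY a ha]
    _ = ∑ i, (op (ψ a) * op (τ (ys i) x)) • xs i := by simp [assoc₁, τB₁, hc']
    _ = op (ψ a) • ∑ i, op (τ (ys i) x) • xs i := by simp [mul_smul, Finset.smul_sum]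
    _ = op (ψ a) • ∑ i, μ (xs i) (ys i) • x := by simp [assoc₁]
    _ = op (ψ a) • x := by rw [← Finset.sum_smul, ← h1A, one_smul]
  have leftinv : ∀ b ∈ Set.center B, ψ (φ b) = b := by
    intro b hb
    refine faithY _ _ fun y => ?_
    rw [hψY (φ b) (hφcent b hb) y, ← cross1 b hb y]
  have rightinv : ∀ a ∈ Set.center A, φ (ψ a) = a := by
    intro a ha
    refine faithX _ _ fun x => ?_
    rw [hφX (ψ a) (hψcent a ha) x, ← cross2 a ha x]
  -- membership translations
  have memB : ∀ b : Subalgebra.center k B, (b : B) ∈ Set.center B :=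
    fun b => Semigroup.mem_center_iff.mpr (Subalgebra.mem_center_iff.mp b.2)
  have memA : ∀ a : A, a ∈ Set.center A → a ∈ Subalgebra.center k A :=
    fun a ha => Subalgebra.mem_center_iff.mpr (Semigroup.mem_center_iff.mp ha)
  have memB' : ∀ b : B, b ∈ Set.center B → b ∈ Subalgebra.center k B :=
    fun b hb => Subalgebra.mem_center_iff.mpr (Semigroup.mem_center_iff.mp hb)
  have memA' : ∀ a : Subalgebra.center k A, (a : A) ∈ Set.center A :=
    fun a => Semigroup.mem_center_iff.mpr (Subalgebra.mem_center_iff.mp a.2)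
  constructor
  · intro b hb
    refine ⟨φ b, ⟨hφcent b hb, hφX b hb⟩, ?_⟩
    rintro a' ⟨_, ha'⟩
    exact faithX a' (φ b) fun x => by rw [ha' x, hφX b hb x]
  · refine ⟨{ toFun := fun b => ⟨φ b, memA _ (hφcent b (memB b))⟩
              invFun := fun a => ⟨ψ a, memB' _ (hψcent a (memA' a))⟩
              left_inv := ?_
              right_inv := ?_
              map_mul' := ?_
              map_add' := ?_
              commutes' := ?_ }, fun b x => hφX b (memB b) x⟩
    · intro b
      exact Subtype.ext (leftinv b (memB b))
    · intro a
      exact Subtype.ext (rightinv a (memA' a))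
    · intro b b'
      refine Subtype.ext ?_
      show φ ((b : B) * (b' : B)) = φ b * φ b'
      refine faithX _ _ fun x => ?_
      rw [hφX _ (Set.mul_mem_center (memB b) (memB b')) x]
      calc op ((b : B) * (b' : B)) • x = op (b' : B) • op (b : B) • x := by
            rw [← mul_smul, ← op_mul]
      _ = op (b' : B) • (φ b • x) := by rw [hφX _ (memB b) x]
      _ = φ b • op (b' : B) • x := (hX _ _ _).symm
      _ = φ b • (φ b' • x) := by rw [hφX _ (memB b') x]
      _ = (φ b * φ b') • x := (mul_smul _ _ _).symm
    · intro b b'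
      refine Subtype.ext ?_
      show φ ((b : B) + (b' : B)) = φ b + φ b'
      refine faithX _ _ fun x => ?_
      rw [hφX _ (Set.add_mem_center (memB b) (memB b')) x, op_add, add_smul, add_smul,
        hφX _ (memB b) x, hφX _ (memB b') x]
    · intro c
      refine Subtype.ext ?_
      show φ (algebraMap k B c) = algebraMap k A c
      have hcen : algebraMap k B c ∈ Set.center B :=
        Semigroup.mem_center_iff.mpr fun g => (Algebra.commutes c g).symm
      refine faithX _ _ fun x => ?_
      rw [hφX _ hcen x, ← hkX]
end
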